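/- arXiv:2107.06730 — 2 statements merged into one kernel-verified Lean document; each statement's English description precedes it below -/
import Mathlib

section
/- Let X and Y be metric spaces in which every closed bounded set is compact (boundedly compact metric spaces), let f : X → Y be a continuous map, and let U ⊆ X be a dense subset. Assume that for every sequence (u_j) with u_j ∈ U for all j which is escaping in X (i.e., for every compact set K ⊆ X there exists j₀ such that u_j ∉ K for all j ≥ j₀), the image sequence (f(u_j)) is escaping in Y. Then f is a proper map, i.e., the preimage f⁻¹(K) of every compact set K ⊆ Y is compact. -/
/-!
In a proper metric space the cocompact and cobounded filters agree, so properness of `f` amounts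
to `f` tending to infinity along every sequence that tends to infinity. Such a sequence `x` can be
shadowed by a sequence `u` in `U` with `dist (u j) (x j) < 1` and `dist (f (u j)) (f (x j)) < 1`,
and moving a sequence by a bounded amount does not change whether it tends to infinity.
-/

open Filter Topology Metric Bornology

theorem tendsto_atTop_cocompact_iff {X : Type*} [TopologicalSpace X] {u : ℕ → X} :
    Tendsto u atTop (cocompact X) ↔ ∀ K : Set X, IsCompact K → ∃ j₀, ∀ j ≥ j₀, u j ∉ K := by
  simp [atTop_basis.tendsto_iff hasBasis_cocompact]

theorem ProperSpace.of_forall_isClosed_isBounded {X : Type*} [PseudoMetricSpace X]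
    (h : ∀ s : Set X, IsClosed s → IsBounded s → IsCompact s) : ProperSpace X :=
  ⟨fun _ _ => h _ isClosed_closedBall isBounded_closedBall⟩

section PseudoMetric

variable {α : Type*} [PseudoMetricSpace α]

instance Metric.isCountablyGenerated_cobounded : IsCountablyGenerated (cobounded α) := by
  rcases isEmpty_or_nonempty α with hα | ⟨⟨c⟩⟩
  · rw [filter_eq_bot_of_isEmpty (cobounded α)]
    infer_instance
  · rw [← comap_dist_right_atTop c]
    infer_instance

theorem Filter.Tendsto.cobounded_of_dist_le {ι : Type*} {l : Filter ι} {u v : ι → α} {C : ℝ}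
    (hu : Tendsto u l (cobounded α)) (huv : ∀ i, dist (u i) (v i) ≤ C) :
    Tendsto v l (cobounded α) := by
  rcases isEmpty_or_nonempty α with hα | ⟨⟨c⟩⟩
  · exact (filter_eq_bot_of_isEmpty _).le.trans bot_le
  rw [← tendsto_dist_right_atTop_iff c] at hu ⊢
  refine tendsto_atTop_mono (fun i => ?_) (tendsto_atTop_add_const_right _ (-C) hu)
  linarith [dist_triangle (u i) (v i) c, huv i]

theorem Dense.exists_dist_lt_and_dist_apply_lt {β : Type*} [PseudoMetricSpace β] {U : Set α}
    (hU : Dense U) {f : α → β} {x : α} (hf : ContinuousAt f x) {ε : ℝ} (hε : 0 < ε) :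
    ∃ u ∈ U, dist u x < ε ∧ dist (f u) (f x) < ε :=
  hU.inter_nhds_nonempty <|
    inter_mem (ball_mem_nhds x hε) (hf.preimage_mem_nhds (ball_mem_nhds (f x) hε))

end PseudoMetric

theorem tendsto_cocompact_of_dense_of_forall_seq {X Y : Type*} [PseudoMetricSpace X]
    [PseudoMetricSpace Y] [ProperSpace X] [ProperSpace Y] {f : X → Y} (hf : Continuous f)
    {U : Set X} (hU : Dense U)
    (h : ∀ u : ℕ → X, (∀ j, u j ∈ U) → Tendsto u atTop (cocompact X) →
      Tendsto (f ∘ u) atTop (cocompact Y)) :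
    Tendsto f (cocompact X) (cocompact Y) := by
  rw [← cobounded_eq_cocompact, ← cobounded_eq_cocompact] at h ⊢
  refine tendsto_iff_seq_tendsto.2 fun x hx => ?_
  choose u huU hux hfux using fun j =>
    hU.exists_dist_lt_and_dist_apply_lt hf.continuousAt (x := x j) one_pos
  have hu : Tendsto u atTop (cobounded X) :=
    hx.cobounded_of_dist_le fun j => (dist_comm _ _).trans_le (hux j).le
  exact (h u huU hu).cobounded_of_dist_le fun j => (hfux j).le

/-- If `X` and `Y` are boundedly compact metric spaces (every closed bounded set is compact),
`f : X → Y` is continuous, `U ⊆ X` is dense, and every escaping sequence contained in `U` has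
escaping image under `f`, then `f` is proper: preimages of compact sets are compact. -/
theorem properness_from_dense_subset
    {X Y : Type*} [MetricSpace X] [MetricSpace Y]
    (hX : ∀ s : Set X, IsClosed s → Bornology.IsBounded s → IsCompact s)
    (hY : ∀ s : Set Y, IsClosed s → Bornology.IsBounded s → IsCompact s)
    (f : X → Y) (hf : Continuous f)
    (U : Set X) (hU : Dense U)
    (hesc : ∀ u : ℕ → X, (∀ j, u j ∈ U) →
      (∀ K : Set X, IsCompact K → ∃ j₀ : ℕ, ∀ j ≥ j₀, u j ∉ K) →
      (∀ K : Set Y, IsCompact K → ∃ j₀ : ℕ, ∀ j ≥ j₀, f (u j) ∉ K)) :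
    ∀ K : Set Y, IsCompact K → IsCompact (f ⁻¹' K) := by
  have := ProperSpace.of_forall_isClosed_isBounded hX
  have := ProperSpace.of_forall_isClosed_isBounded hY
  have hproper : IsProperMap f := isProperMap_iff_tendsto_cocompact.2
    ⟨hf, tendsto_cocompact_of_dense_of_forall_seq hf hU fun u huU hu =>
      tendsto_atTop_cocompact_iff.2 (hesc u huU (tendsto_atTop_cocompact_iff.1 hu))⟩
  exact fun K hK => hproper.isCompact_preimage hK
end

section
/- For every η ∈ ℝ, the rotation R_η : ℝ⁵ → ℝ⁵ defined by R_η(x, y, z, v, w) = (x cos η + y sin η, y cos η − x sin η, z, v cos η + w sin η, w cos η − v sin η) is an isometry of the sub-Riemannian distance d_C, i.e., d_C(R_η p, R_η q) = d_C(p, q) for all p, q ∈ ℝ⁵, and R_η preserves the functions z and V: z(R_η p) = z(p) and V(R_η p) = V(p) for all p ∈ ℝ⁵. -/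
open MeasureTheory Set

noncomputable section

/-- The Cartan group as `ℝ⁵` with coordinates `(x, y, z, v, w)`. -/
abbrev P5 : Type := ℝ × ℝ × ℝ × ℝ × ℝ

def x5 (p : P5) : ℝ := p.1
def y5 (p : P5) : ℝ := p.2.1
def z5 (p : P5) : ℝ := p.2.2.1
def v5 (p : P5) : ℝ := p.2.2.2.1
def w5 (p : P5) : ℝ := p.2.2.2.2

/-- The function `V = x·v + y·w − (x² + y²)·z/2` on the Cartan group. -/
def VC (p : P5) : ℝ :=
  x5 p * v5 p + y5 p * w5 p - (x5 p ^ 2 + y5 p ^ 2) * z5 p / 2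

/-- A curve `q` is horizontal on the parameter set `I ⊆ ℝ` for the Cartan structure if it is
Lipschitz on `I` and for almost every `t ∈ I` the derivatives of the coordinates satisfy
`z' = (−x'·y + y'·x)/2`, `v' = y'·(x² + y²)/2`, `w' = −x'·(x² + y²)/2`. -/
def CartanHorizOn (I : Set ℝ) (q : ℝ → P5) : Prop :=
  (∃ K : NNReal, LipschitzOnWith K q I) ∧
  ∀ᵐ t ∂(volume.restrict I),
    derivWithin (fun s => z5 (q s)) I t
      = (-(derivWithin (fun s => x5 (q s)) I t) * y5 (q t)
          + (derivWithin (fun s => y5 (q s)) I t) * x5 (q t)) / 2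
    ∧ derivWithin (fun s => v5 (q s)) I t
      = (derivWithin (fun s => y5 (q s)) I t) * (x5 (q t) ^ 2 + y5 (q t) ^ 2) / 2
    ∧ derivWithin (fun s => w5 (q s)) I t
      = -(derivWithin (fun s => x5 (q s)) I t) * (x5 (q t) ^ 2 + y5 (q t) ^ 2) / 2

/-- A curve is unit-speed on `I` if `x'(t)² + y'(t)² = 1` for almost every `t ∈ I`. -/
def CartanUnitSpeedOn (I : Set ℝ) (q : ℝ → P5) : Prop :=
  ∀ᵐ t ∂(volume.restrict I),
    (derivWithin (fun s => x5 (q s)) I t) ^ 2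
      + (derivWithin (fun s => y5 (q s)) I t) ^ 2 = 1

/-- The sub-Riemannian length `∫₀ᵀ √(x'(t)² + y'(t)²) dt` of a curve `q : [0, T] → ℝ⁵`. -/
def cartanLength (T : ℝ) (q : ℝ → P5) : ℝ :=
  ∫ t in Icc (0:ℝ) T,
    Real.sqrt ((derivWithin (fun s => x5 (q s)) (Icc 0 T) t) ^ 2
      + (derivWithin (fun s => y5 (q s)) (Icc 0 T) t) ^ 2)

/-- The sub-Riemannian (Carnot–Carathéodory) distance on the Cartan group: the infimum of
lengths of horizontal Lipschitz curves joining `p` to `q`. -/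
def dCartan (p q : P5) : ℝ :=
  sInf { L : ℝ | ∃ T : ℝ, 0 ≤ T ∧ ∃ γ : ℝ → P5,
    CartanHorizOn (Icc 0 T) γ ∧ γ 0 = p ∧ γ T = q ∧ cartanLength T γ = L }

/-- The rotation `R_η` of the Cartan group. -/
def rotC (η : ℝ) (p : P5) : P5 :=
  (x5 p * Real.cos η + y5 p * Real.sin η,
   y5 p * Real.cos η - x5 p * Real.sin η,
   z5 p,
   v5 p * Real.cos η + w5 p * Real.sin η,
   w5 p * Real.cos η - v5 p * Real.sin η)

/-!
`R_η` is linear and rotates the `(x, y)`-plane and the `(v, w)`-plane by the same angle. The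
horizontality conditions are equivariant under it: `x² + y²` and the area form
`−x'y + y'x` are rotation invariant, and `(v', w') = (x² + y²)/2 · (y', −x')` turns together with
`(x', y')`. So `R_η` maps horizontal curves to horizontal curves of the same speed, hence of the
same length, and `R_{−η}` inverts it; thus it permutes the admissible curves between
corresponding endpoints without changing their lengths.
-/

section Rotation

variable (η : ℝ)

def rotCLinear : P5 →ₗ[ℝ] P5 where
  toFun := rotC η
  map_add' p q := by
    simp only [rotC, x5, y5, z5, v5, w5, Prod.fst_add, Prod.snd_add, Prod.mk_add_mk]
    refine Prod.ext ?_ (Prod.ext ?_ (Prod.ext rfl (Prod.ext ?_ ?_))) <;> dsimp <;> ring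
  map_smul' c p := by
    simp only [rotC, x5, y5, z5, v5, w5, Prod.smul_fst, Prod.smul_snd, Prod.smul_mk,
      smul_eq_mul, RingHom.id_apply]
    refine Prod.ext ?_ (Prod.ext ?_ (Prod.ext rfl (Prod.ext ?_ ?_))) <;> dsimp <;> ring

def rotCL : P5 →L[ℝ] P5 := LinearMap.toContinuousLinearMap (rotCLinear η)

theorem rotC_neg_rotC (p : P5) : rotC (-η) (rotC η p) = p := by
  have hcs := Real.sin_sq_add_cos_sq η
  obtain ⟨x, y, z, v, w⟩ := p
  simp only [rotC, x5, y5, z5, v5, w5, Real.cos_neg, Real.sin_neg]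
  refine Prod.ext ?_ (Prod.ext ?_ (Prod.ext rfl (Prod.ext ?_ ?_))) <;> dsimp
  · linear_combination x * hcs
  · linear_combination y * hcs
  · linear_combination v * hcs
  · linear_combination w * hcs

theorem z5_rotC (p : P5) : z5 (rotC η p) = z5 p := rfl

theorem VC_rotC (p : P5) : VC (rotC η p) = VC p := by
  have hcs := Real.sin_sq_add_cos_sq η
  obtain ⟨x, y, z, v, w⟩ := p
  simp only [VC, rotC, x5, y5, z5, v5, w5]
  linear_combination (x * v + y * w - (x ^ 2 + y ^ 2) * z / 2) * hcs

theorem sq_x5_rotC_add_sq_y5_rotC (p : P5) :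
    x5 (rotC η p) ^ 2 + y5 (rotC η p) ^ 2 = x5 p ^ 2 + y5 p ^ 2 := by
  simp only [rotC, x5, y5]
  linear_combination (p.1 ^ 2 + p.2.1 ^ 2) * Real.sin_sq_add_cos_sq η

end Rotation

def IsCartanHorizontal (p d : P5) : Prop :=
  z5 d = (-(x5 d) * y5 p + y5 d * x5 p) / 2 ∧
  v5 d = y5 d * (x5 p ^ 2 + y5 p ^ 2) / 2 ∧
  w5 d = -(x5 d) * (x5 p ^ 2 + y5 p ^ 2) / 2

theorem IsCartanHorizontal.rotC {p d : P5} (h : IsCartanHorizontal p d) (η : ℝ) :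
    IsCartanHorizontal (rotC η p) (rotC η d) := by
  obtain ⟨hz, hv, hw⟩ := h
  have hcs := Real.sin_sq_add_cos_sq η
  have hr := sq_x5_rotC_add_sq_y5_rotC η p
  refine ⟨?_, ?_, ?_⟩ <;> simp only [_root_.rotC, x5, y5, z5, v5, w5] at hz hv hw hr ⊢
  · linear_combination hz + ((d.1 * p.2.1 - d.2.1 * p.1) / 2) * hcs
  · rw [hr]
    linear_combination Real.cos η * hv + Real.sin η * hw
  · rw [hr]
    linear_combination Real.cos η * hw - Real.sin η * hv

section Derivatives

variable {c : ℝ → P5} {d : P5} {I : Set ℝ} {t : ℝ}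

theorem derivWithin_coords_of_hasDerivWithinAt (h : HasDerivWithinAt c d I t)
    (hU : UniqueDiffWithinAt ℝ I t) :
    derivWithin (fun s => x5 (c s)) I t = x5 d ∧
    derivWithin (fun s => y5 (c s)) I t = y5 d ∧
    derivWithin (fun s => z5 (c s)) I t = z5 d ∧
    derivWithin (fun s => v5 (c s)) I t = v5 d ∧
    derivWithin (fun s => w5 (c s)) I t = w5 d := by
  have h' := h.hasFDerivWithinAt
  refine ⟨?_, ?_, ?_, ?_, ?_⟩ <;> refine HasDerivWithinAt.derivWithin ?_ hU
  · exact h'.fst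
  · exact h'.snd.fst
  · exact h'.snd.snd.fst
  · exact h'.snd.snd.snd.fst
  · exact h'.snd.snd.snd.snd

theorem HasDerivWithinAt.rotC (h : HasDerivWithinAt c d I t) (η : ℝ) :
    HasDerivWithinAt (fun s => rotC η (c s)) (rotC η d) I t :=
  (rotCL η).hasFDerivAt.comp_hasDerivWithinAt t h

theorem derivWithin_cartanHoriz_iff (h : HasDerivWithinAt c d I t)
    (hU : UniqueDiffWithinAt ℝ I t) :
    (derivWithin (fun s => z5 (c s)) I t
      = (-(derivWithin (fun s => x5 (c s)) I t) * y5 (c t)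
          + (derivWithin (fun s => y5 (c s)) I t) * x5 (c t)) / 2
    ∧ derivWithin (fun s => v5 (c s)) I t
      = (derivWithin (fun s => y5 (c s)) I t) * (x5 (c t) ^ 2 + y5 (c t) ^ 2) / 2
    ∧ derivWithin (fun s => w5 (c s)) I t
      = -(derivWithin (fun s => x5 (c s)) I t) * (x5 (c t) ^ 2 + y5 (c t) ^ 2) / 2) ↔
    IsCartanHorizontal (c t) d := by
  obtain ⟨hx, hy, hz, hv, hw⟩ := derivWithin_coords_of_hasDerivWithinAt h hU
  rw [hx, hy, hz, hv, hw]
  rfl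

theorem sq_derivWithin_x5_add_sq_derivWithin_y5 (h : HasDerivWithinAt c d I t)
    (hU : UniqueDiffWithinAt ℝ I t) :
    derivWithin (fun s => x5 (c s)) I t ^ 2 + derivWithin (fun s => y5 (c s)) I t ^ 2
      = x5 d ^ 2 + y5 d ^ 2 := by
  obtain ⟨hx, hy, -⟩ := derivWithin_coords_of_hasDerivWithinAt h hU
  rw [hx, hy]

end Derivatives

theorem LipschitzOnWith.ae_hasDerivWithinAt_Icc {c : ℝ → P5} {K : NNReal} {a b : ℝ}
    (hc : LipschitzOnWith K c (Icc a b)) :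
    ∀ᵐ t ∂(volume.restrict (Icc a b)),
      HasDerivWithinAt c (derivWithin c (Icc a b) t) (Icc a b) t ∧
        UniqueDiffWithinAt ℝ (Icc a b) t := by
  have hIoo : ∀ᵐ t ∂(volume.restrict (Icc a b)), t ∈ Ioo a b := by
    rw [← Measure.restrict_congr_set Ioo_ae_eq_Icc]
    exact ae_restrict_mem measurableSet_Ioo
  filter_upwards [hIoo, hc.ae_differentiableWithinAt measurableSet_Icc] with t ht hd
  exact ⟨hd.hasDerivWithinAt,
    uniqueDiffOn_Icc (ht.1.trans ht.2) t (Ioo_subset_Icc_self ht)⟩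

theorem CartanHorizOn.rotC {a b : ℝ} {γ : ℝ → P5} (h : CartanHorizOn (Icc a b) γ) (η : ℝ) :
    CartanHorizOn (Icc a b) (fun t => rotC η (γ t)) := by
  obtain ⟨⟨K, hK⟩, hae⟩ := h
  refine ⟨⟨_, (rotCL η).lipschitz.comp_lipschitzOnWith hK⟩, ?_⟩
  filter_upwards [hK.ae_hasDerivWithinAt_Icc, hae] with t ⟨hd, hU⟩ hhor
  exact (derivWithin_cartanHoriz_iff (hd.rotC η) hU).2
    ((derivWithin_cartanHoriz_iff hd hU).1 hhor |>.rotC η)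

theorem cartanLength_rotC {T : ℝ} {γ : ℝ → P5} {K : NNReal}
    (hγ : LipschitzOnWith K γ (Icc 0 T)) (η : ℝ) :
    cartanLength T (fun t => rotC η (γ t)) = cartanLength T γ := by
  refine integral_congr_ae ?_
  filter_upwards [hγ.ae_hasDerivWithinAt_Icc] with t ⟨hd, hU⟩
  rw [sq_derivWithin_x5_add_sq_derivWithin_y5 (hd.rotC η) hU,
    sq_derivWithin_x5_add_sq_derivWithin_y5 hd hU, sq_x5_rotC_add_sq_y5_rotC]

def cartanLengths (p q : P5) : Set ℝ :=
  { L : ℝ | ∃ T : ℝ, 0 ≤ T ∧ ∃ γ : ℝ → P5,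
    CartanHorizOn (Icc 0 T) γ ∧ γ 0 = p ∧ γ T = q ∧ cartanLength T γ = L }

theorem dCartan_eq_sInf_cartanLengths (p q : P5) : dCartan p q = sInf (cartanLengths p q) := rfl

theorem cartanLengths_subset_rotC (η : ℝ) (p q : P5) :
    cartanLengths p q ⊆ cartanLengths (rotC η p) (rotC η q) := by
  rintro L ⟨T, hT, γ, hγ, rfl, rfl, rfl⟩
  obtain ⟨K, hK⟩ := hγ.1
  exact ⟨T, hT, _, hγ.rotC η, rfl, rfl, cartanLength_rotC hK η⟩

theorem cartanLengths_rotC (η : ℝ) (p q : P5) :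
    cartanLengths (rotC η p) (rotC η q) = cartanLengths p q := by
  refine Subset.antisymm ?_ (cartanLengths_subset_rotC η p q)
  simpa only [rotC_neg_rotC] using cartanLengths_subset_rotC (-η) (rotC η p) (rotC η q)

theorem dCartan_rotC (η : ℝ) (p q : P5) : dCartan (rotC η p) (rotC η q) = dCartan p q := by
  rw [dCartan_eq_sInf_cartanLengths, cartanLengths_rotC, dCartan_eq_sInf_cartanLengths]

/-- Every rotation `R_η` is an isometry of the sub-Riemannian distance `d_C` and preserves
the coordinate `z` and the function `V`. -/
theorem rotation_isometry (η : ℝ) :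
    (∀ p q : P5, dCartan (rotC η p) (rotC η q) = dCartan p q) ∧
    (∀ p : P5, z5 (rotC η p) = z5 p) ∧
    (∀ p : P5, VC (rotC η p) = VC p) :=
  ⟨dCartan_rotC η, z5_rotC η, VC_rotC η⟩
end
end
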